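/- Let Ω ⊆ ℝ² be open with (0,0) ∈ Ω and let f : ℝ² → ℝ be of class C³ on Ω. Define p₁(x,y) = a₀₀ + a₁₀x + a₀₁(y − (√3/6)h), where a₀₀, a₁₀, a₀₁ are the constant and linear coefficients of the quadratic interpolant built from the data f_Q = f(Q) for Q ∈ {A,B,C,D,E,F}. Then there exist constants C > 0 and h₀ > 0 such that for every 0 < h ≤ h₀ and all (x,y) in S_R, |f(x,y) − p₁(x,y)| ≤ C·h². -/

import Mathlib

set_option linter.unusedVariables false

/-- √3 -/
noncomputable def s3 : ℝ := Real.sqrt 3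

/-- Vertices of the equilateral triangle of side `2h` and the midpoints of its sides. -/
noncomputable def ptA (h : ℝ) : ℝ × ℝ := (-h, s3 / 2 * h)
noncomputable def ptB (h : ℝ) : ℝ × ℝ := (-h / 2, 0)
noncomputable def ptC (h : ℝ) : ℝ × ℝ := (0, -(s3 / 2 * h))
noncomputable def ptD (h : ℝ) : ℝ × ℝ := (h / 2, 0)
noncomputable def ptE (h : ℝ) : ℝ × ℝ := (h, s3 / 2 * h)
noncomputable def ptF (h : ℝ) : ℝ × ℝ := (0, s3 / 2 * h)

/-- Coefficients of the quadratic interpolant. -/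
noncomputable def a00 (h fA fB fC fD fE fF : ℝ) : ℝ := 4 / 9 * (fB + fD + fF) - 1 / 9 * (fA + fC + fE)
noncomputable def a10 (h fA fB fC fD fE fF : ℝ) : ℝ := (-fA - 4 * fB + 4 * fD + fE) / (6 * h)
noncomputable def a01 (h fA fB fC fD fE fF : ℝ) : ℝ := s3 / (18 * h) * (fA - 4 * fB - 2 * fC - 4 * fD + fE + 8 * fF)
noncomputable def a20 (h fA fB fC fD fE fF : ℝ) : ℝ := (fA - 2 * fF + fE) / (2 * h ^ 2)
noncomputable def a11 (h fA fB fC fD fE fF : ℝ) : ℝ := -(s3 / (3 * h ^ 2)) * (fA - 2 * fB + 2 * fD - fE)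
noncomputable def a02 (h fA fB fC fD fE fF : ℝ) : ℝ := (fA - 4 * fB + 4 * fC - 4 * fD + fE + 2 * fF) / (6 * h ^ 2)

/-- The quadratic interpolant `p(x,y)`. -/
noncomputable def interp (h fA fB fC fD fE fF x y : ℝ) : ℝ :=
  a00 h fA fB fC fD fE fF + a10 h fA fB fC fD fE fF * x
    + a01 h fA fB fC fD fE fF * (y - s3 / 6 * h)
    + a20 h fA fB fC fD fE fF * x ^ 2
    + a11 h fA fB fC fD fE fF * x * (y - s3 / 6 * h)
    + a02 h fA fB fC fD fE fF * (y - s3 / 6 * h) ^ 2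

/-- The closed equilateral triangle `S` with vertices `A, C, E`. -/
noncomputable def triS (h : ℝ) : Set (ℝ × ℝ) := convexHull ℝ {ptA h, ptC h, ptE h}
/-- The closed triangle `S_R` with vertices `B, D, F`. -/
noncomputable def triSR (h : ℝ) : Set (ℝ × ℝ) := convexHull ℝ {ptB h, ptD h, ptF h}


/-!
The map `g ↦ p₁[g]` is linear in the sampled values and reproduces affine functions exactly.
It is also stable: if `|g| ≤ ε` at the six nodes, then `|p₁[g]| ≤ 7ε` on the disc of radius `h`,
which contains the nodes and `S_R`. Writing `f = T + R` with `T` the first-order Taylor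
polynomial at the origin, we get `f - p₁[f] = R - p₁[R]`, and `|R| ≤ M h²` on that disc.
-/

open Metric Topology

theorem ContDiffAt.exists_norm_sub_sub_fderiv_le {E F : Type*} [NormedAddCommGroup E]
    [NormedSpace ℝ E] [NormedAddCommGroup F] [NormedSpace ℝ F] {f : E → F} {x : E}
    (hf : ContDiffAt ℝ 2 f x) :
    ∃ M > 0, ∃ r > 0, ∀ y ∈ closedBall x r,
      ‖f y - f x - fderiv ℝ f x (y - x)‖ ≤ M * ‖y - x‖ ^ 2 := by
  obtain ⟨K, t, ht, hK⟩ := (hf.fderiv_right (m := 1) (by norm_num)).exists_lipschitzOnWith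
  have hdiff : ∀ᶠ y in 𝓝 x, DifferentiableAt ℝ f y :=
    (hf.eventually (by simp)).mono fun y hy => hy.differentiableAt (by norm_num)
  obtain ⟨r, hr, hball⟩ := Metric.mem_nhds_iff.mp (Filter.inter_mem ht hdiff)
  refine ⟨K + 1, by positivity, r / 2, by positivity, fun y hy => ?_⟩
  rw [mem_closedBall, dist_eq_norm] at hy
  have hsub : closedBall x ‖y - x‖ ⊆ t ∩ {z | DifferentiableAt ℝ f z} :=
    (closedBall_subset_ball (by linarith)).trans hball
  have hbound : ∀ z ∈ closedBall x ‖y - x‖, ‖fderiv ℝ f z - fderiv ℝ f x‖ ≤ (K + 1) * ‖y - x‖ := by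
    intro z hz
    calc ‖fderiv ℝ f z - fderiv ℝ f x‖ ≤ K * ‖z - x‖ :=
          hK.norm_sub_le (hsub hz).1 (hsub (mem_closedBall_self (norm_nonneg _))).1
      _ ≤ (K + 1) * ‖y - x‖ := by
          rw [mem_closedBall, dist_eq_norm] at hz
          gcongr
          linarith
  calc ‖f y - f x - fderiv ℝ f x (y - x)‖ ≤ (K + 1) * ‖y - x‖ * ‖y - x‖ :=
        (convex_closedBall x _).norm_image_sub_le_of_norm_fderiv_le' (fun z hz => (hsub hz).2)
          hbound (mem_closedBall_self (norm_nonneg _)) (by simp [dist_eq_norm])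
    _ = (K + 1) * ‖y - x‖ ^ 2 := by ring

lemma s3_sq : s3 ^ 2 = 3 := Real.sq_sqrt (by norm_num)

lemma s3_nonneg : 0 ≤ s3 := Real.sqrt_nonneg 3

lemma s3_le_two : s3 ≤ 2 := by nlinarith [s3_sq, s3_nonneg]

lemma norm_nodes_le {h : ℝ} (hh : 0 ≤ h) :
    ‖ptA h‖ ≤ h ∧ ‖ptB h‖ ≤ h ∧ ‖ptC h‖ ≤ h ∧ ‖ptD h‖ ≤ h ∧ ‖ptE h‖ ≤ h ∧ ‖ptF h‖ ≤ h := by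
  have hy : s3 / 2 * h ≤ h := by nlinarith [s3_le_two]
  simp [ptA, ptB, ptC, ptD, ptE, ptF, Prod.norm_def, abs_of_nonneg hh, abs_of_nonneg s3_nonneg,
    hh, hy, neg_div]

lemma triSR_subset_closedBall {h : ℝ} (hh : 0 ≤ h) : triSR h ⊆ closedBall 0 h := by
  obtain ⟨-, hB, -, hD, -, hF⟩ := norm_nodes_le hh
  refine convexHull_min ?_ (convex_closedBall 0 h)
  simp [Set.insert_subset_iff, hB, hD, hF]

/-- The paper's `p₁`, as a function of the sampled function `g`. -/
noncomputable def interpLinearPart (h : ℝ) (g : ℝ × ℝ → ℝ) (z : ℝ × ℝ) : ℝ :=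
  a00 h (g (ptA h)) (g (ptB h)) (g (ptC h)) (g (ptD h)) (g (ptE h)) (g (ptF h)) +
    a10 h (g (ptA h)) (g (ptB h)) (g (ptC h)) (g (ptD h)) (g (ptE h)) (g (ptF h)) * z.1 +
    a01 h (g (ptA h)) (g (ptB h)) (g (ptC h)) (g (ptD h)) (g (ptE h)) (g (ptF h)) *
      (z.2 - s3 / 6 * h)

lemma interpLinearPart_add (h : ℝ) (g₁ g₂ : ℝ × ℝ → ℝ) (z : ℝ × ℝ) :
    interpLinearPart h (g₁ + g₂) z = interpLinearPart h g₁ z + interpLinearPart h g₂ z := by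
  simp only [interpLinearPart, a00, a10, a01, Pi.add_apply]
  ring

lemma ContinuousLinearMap.apply_prod_eq (ℓ : ℝ × ℝ →L[ℝ] ℝ) (w : ℝ × ℝ) :
    ℓ w = w.1 * ℓ (1, 0) + w.2 * ℓ (0, 1) :=
  calc ℓ w = ℓ (w.1 • ((1 : ℝ), (0 : ℝ)) + w.2 • ((0 : ℝ), (1 : ℝ))) := by
        congr 1; ext <;> simp
    _ = w.1 * ℓ (1, 0) + w.2 * ℓ (0, 1) := by
        rw [map_add, map_smul, map_smul, smul_eq_mul, smul_eq_mul]

lemma interpLinearPart_const_add_clm {h : ℝ} (hh : h ≠ 0) (c : ℝ) (ℓ : ℝ × ℝ →L[ℝ] ℝ)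
    (z : ℝ × ℝ) : interpLinearPart h (fun w => c + ℓ w) z = c + ℓ z := by
  obtain ⟨c₁, c₂, hℓ⟩ : ∃ c₁ c₂, ∀ w, ℓ w = w.1 * c₁ + w.2 * c₂ := ⟨_, _, ℓ.apply_prod_eq⟩
  simp only [interpLinearPart, a00, a10, a01, hℓ, ptA, ptB, ptC, ptD, ptE, ptF]
  field_simp
  linear_combination (648 * h * c₂ * z.2 - 108 * h ^ 2 * c₂ * s3) * s3_sq

lemma abs_interpLinearPart_le {h ε : ℝ} (hh : 0 < h) {r : ℝ × ℝ → ℝ} {z : ℝ × ℝ}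
    (hz : ‖z‖ ≤ h) (hr : ∀ w, ‖w‖ ≤ h → |r w| ≤ ε) : |interpLinearPart h r z| ≤ 7 * ε := by
  obtain ⟨hA, hB, hC, hD, hE, hF⟩ := norm_nodes_le hh.le
  obtain ⟨hA₁, hA₂⟩ := abs_le.mp (hr _ hA)
  obtain ⟨hB₁, hB₂⟩ := abs_le.mp (hr _ hB)
  obtain ⟨hC₁, hC₂⟩ := abs_le.mp (hr _ hC)
  obtain ⟨hD₁, hD₂⟩ := abs_le.mp (hr _ hD)
  obtain ⟨hE₁, hE₂⟩ := abs_le.mp (hr _ hE)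
  obtain ⟨hF₁, hF₂⟩ := abs_le.mp (hr _ hF)
  have hε : 0 ≤ ε := by linarith
  have hx : |z.1| ≤ h := (norm_fst_le z).trans hz
  have hy : |z.2 - s3 / 6 * h| ≤ 4 / 3 * h := by
    obtain ⟨hy₁, hy₂⟩ := abs_le.mp ((norm_snd_le z).trans hz)
    rw [abs_le]
    constructor <;> nlinarith [s3_nonneg, s3_le_two]
  simp only [interpLinearPart]
  generalize r (ptA h) = eA, r (ptB h) = eB, r (ptC h) = eC, r (ptD h) = eD, r (ptE h) = eE,
    r (ptF h) = eF at *
  have h₀ : |a00 h eA eB eC eD eE eF| ≤ 5 / 3 * ε := by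
    rw [a00, abs_le]; constructor <;> linarith
  have h₁ : |a10 h eA eB eC eD eE eF * z.1| ≤ 5 / 3 * ε := by
    have hnum : |-eA - 4 * eB + 4 * eD + eE| ≤ 10 * ε := by
      rw [abs_le]; constructor <;> linarith
    rw [a10, abs_mul, abs_div, abs_of_pos (by positivity : (0 : ℝ) < 6 * h)]
    calc |-eA - 4 * eB + 4 * eD + eE| / (6 * h) * |z.1| ≤ 10 * ε / (6 * h) * h := by gcongr
      _ = 5 / 3 * ε := by field_simp; ring
  have h₂ : |a01 h eA eB eC eD eE eF * (z.2 - s3 / 6 * h)| ≤ 80 / 27 * ε := by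
    have hnum : |eA - 4 * eB - 2 * eC - 4 * eD + eE + 8 * eF| ≤ 20 * ε := by
      rw [abs_le]; constructor <;> linarith
    rw [a01, abs_mul, abs_mul, abs_div, abs_of_pos (by positivity : (0 : ℝ) < 18 * h),
      abs_of_nonneg s3_nonneg]
    calc s3 / (18 * h) * |eA - 4 * eB - 2 * eC - 4 * eD + eE + 8 * eF| * |z.2 - s3 / 6 * h|
        ≤ 2 / (18 * h) * (20 * ε) * (4 / 3 * h) := by gcongr; exact s3_le_two
      _ = 80 / 27 * ε := by field_simp; ring
  calc _ ≤ _ := abs_add_three _ _ _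
    _ ≤ 7 * ε := by linarith

/-- The linear part `p₁` of the quadratic interpolant approximates a `C³` function to
second order on `S_R`. -/
theorem linear_part_second_order (Ω : Set (ℝ × ℝ)) (hΩ : IsOpen Ω) (hmem : (0, 0) ∈ Ω)
    (f : ℝ × ℝ → ℝ) (hf : ContDiffOn ℝ 3 f Ω) :
    ∃ C > 0, ∃ h₀ > 0, ∀ h : ℝ, 0 < h → h ≤ h₀ →
      ∀ z ∈ triSR h,
        |f z - (a00 h (f (ptA h)) (f (ptB h)) (f (ptC h)) (f (ptD h)) (f (ptE h)) (f (ptF h)) +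
            a10 h (f (ptA h)) (f (ptB h)) (f (ptC h)) (f (ptD h)) (f (ptE h)) (f (ptF h)) * z.1 +
            a01 h (f (ptA h)) (f (ptB h)) (f (ptC h)) (f (ptD h)) (f (ptE h)) (f (ptF h)) *
              (z.2 - s3 / 6 * h))| ≤ C * h ^ 2 := by
  rw [Prod.mk_zero_zero] at hmem
  obtain ⟨M, hM, r, hr, htaylor⟩ :=
    ((hf.contDiffAt (hΩ.mem_nhds hmem)).of_le (by norm_num)).exists_norm_sub_sub_fderiv_le
  refine ⟨8 * M, by positivity, r, hr, fun h hh hhr z hz => ?_⟩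
  set R : ℝ × ℝ → ℝ := fun w => f w - (f 0 + fderiv ℝ f 0 w) with hR
  have hrem : ∀ w, ‖w‖ ≤ h → |R w| ≤ M * h ^ 2 := fun w hw => by
    have := htaylor w (mem_closedBall_zero_iff.mpr (hw.trans hhr))
    rw [sub_zero, sub_sub, Real.norm_eq_abs] at this
    exact this.trans (by gcongr)
  have hz' : ‖z‖ ≤ h := mem_closedBall_zero_iff.mp (triSR_subset_closedBall hh.le hz)
  have hsplit : interpLinearPart h f z = f 0 + fderiv ℝ f 0 z + interpLinearPart h R z := by
    rw [← interpLinearPart_const_add_clm hh.ne' (f 0) (fderiv ℝ f 0), ← interpLinearPart_add]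
    congr 1
    ext w
    simp [hR]
  calc |f z - interpLinearPart h f z| = |R z - interpLinearPart h R z| := by
        rw [hsplit, hR, sub_add_eq_sub_sub]
    _ ≤ |R z| + |interpLinearPart h R z| := abs_sub _ _
    _ ≤ M * h ^ 2 + 7 * (M * h ^ 2) :=
        add_le_add (hrem z hz') (abs_interpLinearPart_le hh hz' hrem)
    _ = 8 * M * h ^ 2 := by ring
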